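/- arXiv:2102.03576 — 6 statements merged into one kernel-verified Lean document; each statement's English description precedes it below -/
import Mathlib

section
/- Fix n ∈ (ℕ_{≥1})^N and a multi-index j with 0 ≤ j_i ≤ n_i - 1. The closed subspace 𝒜_j = cl span{e_{nk+j} : k ∈ ℕ^N} is a reducing subspace for the multiplication operator M_{z^n} on A_α^2(B_N); that is, both 𝒜_j and its orthogonal complement are invariant under M_{z^n}. -/
open Submodule

/-- The closed subspace `𝒜_j = cl span{e_{nk+j} : k ∈ ℕ^N}` of the weighted Bergman space. -/
noncomputable def calA {N : ℕ} {H : Type*} [NormedAddCommGroup H] [InnerProductSpace ℂ H]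
    (e : HilbertBasis (Fin N → ℕ) ℂ H) (n j : Fin N → ℕ) : Submodule ℂ H :=
  (Submodule.span ℂ (Set.range fun k : Fin N → ℕ => e (fun i => n i * k i + j i))).topologicalClosure

open scoped InnerProductSpace in
lemma mem_orth_closure_span_iff {H : Type*} [NormedAddCommGroup H] [InnerProductSpace ℂ H]
    (S : Set H) (x : H) :
    x ∈ ((Submodule.span ℂ S).topologicalClosure)ᗮ ↔ ∀ v ∈ S, ⟪v, x⟫_ℂ = 0 := by
  constructor
  · intro hx v hv
    exact hx v ((Submodule.le_topologicalClosure _) (Submodule.subset_span hv))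
  · intro h
    rw [Submodule.mem_orthogonal]
    intro u hu
    have hle : (Submodule.span ℂ S).topologicalClosure ≤ (ℂ ∙ x)ᗮ :=
      Submodule.topologicalClosure_minimal _
        (Submodule.span_le.mpr fun v hv =>
          Submodule.mem_orthogonal_singleton_iff_inner_right.mpr (inner_eq_zero_symm.mp (h v hv)))
        (Submodule.isClosed_orthogonal (ℂ ∙ x))
    exact Submodule.mem_orthogonal_singleton_iff_inner_left.mp (hle hu)

open scoped InnerProductSpace in
lemma ext_of_inner_basis {ι : Type*} {H : Type*} [NormedAddCommGroup H]
    [InnerProductSpace ℂ H] [CompleteSpace H] (e : HilbertBasis ι ℂ H) {u w : H}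
    (h : ∀ i, ⟪e i, u⟫_ℂ = ⟪e i, w⟫_ℂ) : u = w := by
  have hm : u - w ∈ ((Submodule.span ℂ (Set.range e)).topologicalClosure)ᗮ := by
    rw [mem_orth_closure_span_iff]
    rintro v ⟨i, rfl⟩
    rw [inner_sub_right, h i, sub_self]
  rw [e.dense_span, Submodule.top_orthogonal_eq_bot, Submodule.mem_bot, sub_eq_zero] at hm
  exact hm

open scoped InnerProductSpace in
/-- `𝒜_j` is a reducing subspace for the multiplication operator `M_{z^n}` on `A_α²(B_N)`:
both `𝒜_j` and its orthogonal complement are invariant under `M_{z^n}`. Here `H` is the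
weighted Bergman space `A_α²(B_N)`, `e` its orthonormal basis of normalized monomials, and
`T = M_{z^n}` is characterized by its action `T e_m = sqrt((m+n)! Γ(N+|m|+α+1) /
(m! Γ(N+|m+n|+α+1))) e_{m+n}` on the basis. -/
theorem calA_reducing (N : ℕ) (hN : 1 ≤ N) (α : ℝ) (hα : -1 < α)
    (H : Type*) [NormedAddCommGroup H] [InnerProductSpace ℂ H] [CompleteSpace H]
    (e : HilbertBasis (Fin N → ℕ) ℂ H) (n : Fin N → ℕ) (hn : ∀ i, 1 ≤ n i)
    (j : Fin N → ℕ) (hj : ∀ i, j i < n i)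
    (T : H →L[ℂ] H)
    (hT : ∀ m : Fin N → ℕ, T (e m) =
      (Real.sqrt ((∏ i, ((m i + n i).factorial : ℝ)) * Real.Gamma (N + (∑ i, m i) + α + 1) /
        ((∏ i, ((m i).factorial : ℝ)) * Real.Gamma (N + (∑ i, (m i + n i)) + α + 1))) : ℂ) •
        e (fun i => m i + n i)) :
    (∀ x ∈ calA e n j, T x ∈ calA e n j) ∧
    (∀ x ∈ (calA e n j)ᗮ, T x ∈ (calA e n j)ᗮ) := by
  classical
  set c : (Fin N → ℕ) → ℝ := fun m =>
    Real.sqrt ((∏ i, ((m i + n i).factorial : ℝ)) * Real.Gamma (N + (∑ i, m i) + α + 1) /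
      ((∏ i, ((m i).factorial : ℝ)) * Real.Gamma (N + (∑ i, (m i + n i)) + α + 1))) with hc
  set S : Set H := Set.range fun k : Fin N → ℕ => e (fun i => n i * k i + j i) with hS
  have hTS : ∀ v ∈ S, T v ∈ Submodule.span ℂ S := by
    rintro v ⟨k, rfl⟩
    rw [hT]
    refine Submodule.smul_mem _ _ (Submodule.subset_span ⟨fun i => k i + 1, ?_⟩)
    show e (fun i => n i * (k i + 1) + j i) = e (fun i => n i * k i + j i + n i)
    exact congrArg e (funext fun i => by ring)
  constructor
  · intro x hx
    have hmaps : Set.MapsTo T ((Submodule.span ℂ S : Submodule ℂ H) : Set H)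
        ((Submodule.span ℂ S : Submodule ℂ H) : Set H) := by
      intro v hv
      induction hv using Submodule.span_induction with
      | mem v hv => exact hTS v hv
      | zero => simp only [map_zero]; exact Submodule.zero_mem _
      | add a b _ _ ha hb => rw [map_add]; exact Submodule.add_mem _ ha hb
      | smul r a _ ha => rw [map_smul]; exact Submodule.smul_mem _ _ ha
    exact hmaps.closure T.continuous hx
  · intro x hx
    rw [calA, mem_orth_closure_span_iff] at hx ⊢
    rintro v ⟨k, rfl⟩
    rw [← ContinuousLinearMap.adjoint_inner_left]
    by_cases hk : ∀ i, 1 ≤ k i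
    · have hadj : (ContinuousLinearMap.adjoint T) (e fun i => n i * k i + j i)
          = ((c fun i => n i * (k i - 1) + j i : ℝ) : ℂ) • e (fun i => n i * (k i - 1) + j i) := by
        apply ext_of_inner_basis e
        intro m
        rw [ContinuousLinearMap.adjoint_inner_right, hT, inner_smul_left, inner_smul_right,
          orthonormal_iff_ite.mp e.orthonormal, orthonormal_iff_ite.mp e.orthonormal]
        have hiff : ((fun i => m i + n i) = fun i => n i * k i + j i) ↔
            m = fun i => n i * (k i - 1) + j i := by
          constructor
          · intro hcon
            funext i
            have h1 := congrFun hcon i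
            have hki : n i * k i = n i * (k i - 1) + n i := by
              conv_lhs => rw [← Nat.sub_add_cancel (hk i)]
              ring
            omega
          · intro hcon
            subst hcon
            funext i
            have hki : n i * k i = n i * (k i - 1) + n i := by
              conv_lhs => rw [← Nat.sub_add_cancel (hk i)]
              ring
            show n i * (k i - 1) + j i + n i = n i * k i + j i
            omega
        by_cases hq : m = fun i => n i * (k i - 1) + j i
        · rw [if_pos (hiff.mpr hq), if_pos hq, hq, mul_one, mul_one, Complex.conj_ofReal]
        · rw [if_neg (fun h => hq (hiff.mp h)), if_neg hq, mul_zero, mul_zero]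
      have h0 : ⟪e (fun i => n i * (k i - 1) + j i), x⟫_ℂ = 0 :=
        hx _ ⟨fun i => k i - 1, rfl⟩
      rw [hadj, inner_smul_left, h0, mul_zero]
    · have hadj : (ContinuousLinearMap.adjoint T) (e fun i => n i * k i + j i) = 0 := by
        apply ext_of_inner_basis e
        intro m
        rw [ContinuousLinearMap.adjoint_inner_right, hT, inner_smul_left,
          orthonormal_iff_ite.mp e.orthonormal]
        push_neg at hk
        obtain ⟨i0, hi0⟩ := hk
        have h2 : (fun i => m i + n i) ≠ fun i => n i * k i + j i := by
          intro hcon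
          have h1 := congrFun hcon i0
          have hk0 : k i0 = 0 := by omega
          rw [hk0, Nat.mul_zero, Nat.zero_add] at h1
          have := hn i0
          have := hj i0
          omega
        rw [if_neg h2, mul_zero, inner_zero_right]
      rw [hadj, inner_zero_left]
end

section
/- Let N ≥ 2, α > -1, n ∈ (ℕ_{≥1})^N with n_m = min_i n_i, and j a multi-index with 0 ≤ j_i ≤ n_i - 1. Define I_1(k) = |nk+j|! Γ(N+|k|+α+1) / (|k|! Γ(N+|nk+j|+α+1)). Then there exist positive constants C_1, C_2 such that C_1 ≤ liminf_{|k|→∞} I_1(k) ≤ limsup_{|k|→∞} I_1(k) ≤ C_2. In particular, I_1(k) is bounded above and bounded away from 0 for all large |k|. -/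
open Filter

lemma fact_prod_cast (s d : ℕ) :
    (((s + d).factorial : ℝ)) = (s.factorial : ℝ) * ∏ t ∈ Finset.range d, ((s : ℝ) + t + 1) := by
  induction d with
  | zero => simp
  | succ d ih =>
      rw [Finset.prod_range_succ, ← mul_assoc, ← ih]
      have : s + (d + 1) = (s + d) + 1 := by omega
      rw [this, Nat.factorial_succ]
      push_cast
      ring

lemma Gamma_prod (y : ℝ) (hy : 0 < y) (d : ℕ) :
    Real.Gamma (y + d) = Real.Gamma y * ∏ t ∈ Finset.range d, (y + t) := by
  induction d with
  | zero => simp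
  | succ d ih =>
      have h1 : y + (d + 1 : ℕ) = (y + d) + 1 := by push_cast; ring
      rw [h1, Real.Gamma_add_one (by positivity), ih, Finset.prod_range_succ]
      ring

lemma tele (a : ℝ) (n : ℕ) :
    (∏ r ∈ Finset.range n, (a + r + 1)) * a = (∏ r ∈ Finset.range n, (a + r)) * (a + n) := by
  have e : (∏ r ∈ Finset.range n, (a + r + 1)) =
      ∏ x ∈ Finset.range n, (fun r : ℕ => a + r) (x + 1) :=
    Finset.prod_congr rfl (fun x _ => by push_cast; ring)
  calc (∏ r ∈ Finset.range n, (a + r + 1)) * a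
      = (∏ x ∈ Finset.range n, (fun r : ℕ => a + r) (x + 1)) * ((fun r : ℕ => a + r) 0) := by
        rw [e]; norm_num
    _ = ∏ x ∈ Finset.range (n + 1), ((fun r : ℕ => a + r) x) := (Finset.prod_range_succ' (fun r : ℕ => a + (r:ℝ)) n).symm
    _ = (∏ r ∈ Finset.range n, (a + r)) * (a + n) := Finset.prod_range_succ _ n

lemma key_prod (s c : ℕ) (d : ℕ) :
    (∏ t ∈ Finset.range d, ((s : ℝ) + t + 1)) * (∏ r ∈ Finset.range c, ((s : ℝ) + d + r + 1)) =
      (∏ t ∈ Finset.range d, ((s : ℝ) + t + c + 1)) * (∏ r ∈ Finset.range c, ((s : ℝ) + r + 1)) := by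
  induction d with
  | zero => simp
  | succ d ih =>
      have ht := tele ((s : ℝ) + d + 1) c
      have e1 : (∏ r ∈ Finset.range c, ((s : ℝ) + ((d + 1 : ℕ) : ℝ) + r + 1)) =
          ∏ r ∈ Finset.range c, (((s : ℝ) + d + 1) + r + 1) :=
        Finset.prod_congr rfl (fun r _ => by push_cast; ring)
      have e2 : (∏ r ∈ Finset.range c, (((s : ℝ) + d + 1) + r)) =
          ∏ r ∈ Finset.range c, ((s : ℝ) + d + r + 1) :=
        Finset.prod_congr rfl (fun r _ => by ring)
      rw [Finset.prod_range_succ, Finset.prod_range_succ]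
      push_cast
      push_cast at e1 e2 ht ih
      calc (∏ t ∈ Finset.range d, ((s:ℝ) + t + 1)) * ((s:ℝ) + d + 1) *
            ∏ r ∈ Finset.range c, ((s:ℝ) + (d + 1) + r + 1)
          = (∏ t ∈ Finset.range d, ((s:ℝ) + t + 1)) *
            ((∏ r ∈ Finset.range c, (((s:ℝ) + d + 1) + r + 1)) * ((s:ℝ) + d + 1)) := by
            rw [show (∏ r ∈ Finset.range c, ((s:ℝ) + ((d:ℝ) + 1) + r + 1)) =
              ∏ r ∈ Finset.range c, (((s:ℝ) + d + 1) + r + 1) from e1]; ring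
        _ = (∏ t ∈ Finset.range d, ((s:ℝ) + t + 1)) *
            ((∏ r ∈ Finset.range c, (((s:ℝ) + d + 1) + r)) * (((s:ℝ) + d + 1) + c)) := by rw [ht]
        _ = ((∏ t ∈ Finset.range d, ((s:ℝ) + t + 1)) *
            (∏ r ∈ Finset.range c, ((s:ℝ) + d + r + 1))) * ((s:ℝ) + d + 1 + c) := by rw [e2]; ring
        _ = ((∏ t ∈ Finset.range d, ((s:ℝ) + t + c + 1)) *
            (∏ r ∈ Finset.range c, ((s:ℝ) + r + 1))) * ((s:ℝ) + d + 1 + c) := by rw [ih]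
        _ = (∏ t ∈ Finset.range d, ((s:ℝ) + t + c + 1)) * ((s:ℝ) + (d:ℝ) + c + 1) *
            ∏ r ∈ Finset.range c, ((s:ℝ) + r + 1) := by ring


/-- The filter on multi-indices `k ∈ ℕ^N` corresponding to `|k| → ∞`. -/
def multiAtTop (N : ℕ) : Filter (Fin N → ℕ) :=
  Filter.comap (fun k : Fin N → ℕ => ∑ i, k i) Filter.atTop

/-- `I_1(k) = |nk+j|! Γ(N+|k|+α+1) / (|k|! Γ(N+|nk+j|+α+1))`. -/
noncomputable def Ione (N : ℕ) (α : ℝ) (n j k : Fin N → ℕ) : ℝ :=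
  ((∑ i, (n i * k i + j i)).factorial : ℝ) * Real.Gamma (N + (∑ i, k i) + α + 1) /
    (((∑ i, k i).factorial : ℝ) * Real.Gamma (N + (∑ i, (n i * k i + j i)) + α + 1))

lemma Ione_eq (N : ℕ) (α : ℝ) (hx : 0 < (N : ℝ) + α + 1) (n j k : Fin N → ℕ)
    (hsm : ∑ i, k i ≤ ∑ i, (n i * k i + j i)) :
    Ione N α n j k = ∏ t ∈ Finset.range ((∑ i, (n i * k i + j i)) - ∑ i, k i),
      (((∑ i, k i : ℕ) : ℝ) + t + 1) / ((((N : ℝ) + α + 1) + (∑ i, k i : ℕ)) + t) := by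
  set s := ∑ i, k i with hs
  set m := ∑ i, (n i * k i + j i) with hmdef
  set d := m - s with hd
  have hm : m = s + d := by omega
  have hxs : (0 : ℝ) < ((N : ℝ) + α + 1) + s := by positivity
  have hfac : ((m.factorial : ℝ)) = (s.factorial : ℝ) * ∏ t ∈ Finset.range d, ((s : ℝ) + t + 1) := by
    rw [hm]; exact_mod_cast fact_prod_cast s d
  have hG : Real.Gamma ((N : ℝ) + (m : ℝ) + α + 1)
      = Real.Gamma ((N : ℝ) + (s : ℝ) + α + 1) *
        ∏ t ∈ Finset.range d, ((((N : ℝ) + α + 1) + s) + t) := by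
    have h := Gamma_prod (((N : ℝ) + α + 1) + s) hxs d
    have e1 : (((N : ℝ) + α + 1) + s) + (d : ℝ) = (N : ℝ) + (m : ℝ) + α + 1 := by
      rw [hm]; push_cast; ring
    have e2 : Real.Gamma (((N : ℝ) + α + 1) + (s : ℝ)) = Real.Gamma ((N : ℝ) + (s : ℝ) + α + 1) :=
      congrArg Real.Gamma (by ring)
    rw [e1, e2] at h; exact h
  have hGpos : 0 < Real.Gamma ((N : ℝ) + (s : ℝ) + α + 1) :=
    Real.Gamma_pos_of_pos (by linarith)
  have hfpos : (0 : ℝ) < s.factorial := by exact_mod_cast s.factorial_pos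
  have hP2 : (0 : ℝ) < ∏ t ∈ Finset.range d, ((((N : ℝ) + α + 1) + s) + t) :=
    Finset.prod_pos (fun t _ => by positivity)
  unfold Ione
  rw [← hs, ← hmdef, hfac, hG, Finset.prod_div_distrib]
  field_simp

set_option maxHeartbeats 1000000 in
lemma Ione_pt_bounds (N : ℕ) (hN : 2 ≤ N) (α : ℝ) (hα : -1 < α)
    (n : Fin N → ℕ) (hn : ∀ i, 1 ≤ n i) (j : Fin N → ℕ) (k : Fin N → ℕ) :
    ((((∑ i, n i) + (∑ i, j i) + ⌈(N : ℝ) + α + 1⌉₊ + 1 : ℕ) : ℝ))⁻¹ ^ (⌈(N : ℝ) + α + 1⌉₊)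
      ≤ Ione N α n j k ∧ Ione N α n j k ≤ 1 := by
  have hN2 : (2 : ℝ) ≤ (N : ℝ) := by exact_mod_cast hN
  have hx0 : (0 : ℝ) < (N : ℝ) + α + 1 := by linarith
  have hx1 : (1 : ℝ) ≤ (N : ℝ) + α + 1 := by linarith
  set x : ℝ := (N : ℝ) + α + 1 with hxdef
  set c : ℕ := ⌈x⌉₊ with hcdef
  have hxc : x ≤ c := Nat.le_ceil x
  set A : ℕ := ∑ i, n i with hA
  set J : ℕ := ∑ i, j i with hJ
  set B : ℕ := A + J + c + 1 with hB
  set s : ℕ := ∑ i, k i with hs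
  set m : ℕ := ∑ i, (n i * k i + j i) with hm
  have hsm : s ≤ m := by
    apply Finset.sum_le_sum
    intro i _
    calc k i ≤ n i * k i := Nat.le_mul_of_pos_left (k i) (hn i)
      _ ≤ n i * k i + j i := Nat.le_add_right _ _
  have hmA : m ≤ A * s + J := by
    have h1 : m = (∑ i, n i * k i) + J := by rw [hm, hJ, Finset.sum_add_distrib]
    have h2 : (∑ i, n i * k i) ≤ ∑ i, A * k i := by
      apply Finset.sum_le_sum
      intro i _
      exact Nat.mul_le_mul_right _ (Finset.single_le_sum (fun i _ => Nat.zero_le (n i))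
        (Finset.mem_univ i))
    rw [h1, hs, Finset.mul_sum]
    omega
  set d : ℕ := m - s with hd
  have hmd : m = s + d := by omega
  have heq := Ione_eq N α hx0 n j k hsm
  rw [← hs, ← hm, ← hd, ← hxdef] at heq
  constructor
  · -- lower bound
    rw [heq]
    have hBpos : (0 : ℝ) < (B : ℝ) := by positivity
    have step1 : ∏ t ∈ Finset.range d, ((s : ℝ) + t + 1) / ((s : ℝ) + t + c + 1)
        ≤ ∏ t ∈ Finset.range d, ((s : ℝ) + t + 1) / ((x + s) + t) := by
      apply Finset.prod_le_prod
      · intro t _; positivity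
      · intro t _
        apply div_le_div_of_nonneg_left (by positivity) (by positivity)
        have : (c : ℝ) ≤ (c : ℝ) + 1 := by linarith
        linarith [hxc]
    have step2 : ∏ t ∈ Finset.range d, ((s : ℝ) + t + 1) / ((s : ℝ) + t + c + 1)
        = (∏ r ∈ Finset.range c, ((s : ℝ) + r + 1)) /
          (∏ r ∈ Finset.range c, ((s : ℝ) + d + r + 1)) := by
      rw [Finset.prod_div_distrib]
      rw [div_eq_div_iff (Finset.prod_pos (fun t _ => by positivity)).ne'
        (Finset.prod_pos (fun r _ => by positivity)).ne']
      rw [key_prod s c d]; ring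
    have step3 : ((B : ℝ))⁻¹ ^ c ≤ (∏ r ∈ Finset.range c, ((s : ℝ) + r + 1)) /
        (∏ r ∈ Finset.range c, ((s : ℝ) + d + r + 1)) := by
      rw [← Finset.prod_div_distrib]
      calc ((B : ℝ))⁻¹ ^ c = ∏ _r ∈ Finset.range c, ((B : ℝ))⁻¹ := by
            rw [Finset.prod_const, Finset.card_range]
        _ ≤ ∏ r ∈ Finset.range c, ((s : ℝ) + r + 1) / ((s : ℝ) + d + r + 1) := by
            apply Finset.prod_le_prod
            · intro r _; positivity
            · intro r hr
              rw [Finset.mem_range] at hr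
              rw [inv_eq_one_div, div_le_div_iff₀ hBpos (by positivity)]
              have hmA' : (s : ℝ) + (d : ℝ) ≤ (A : ℝ) * (s : ℝ) + (J : ℝ) := by
                have : s + d ≤ A * s + J := by omega
                exact_mod_cast this
              have hr' : (r : ℝ) + 1 ≤ (c : ℝ) := by exact_mod_cast hr
              have hBr : (B : ℝ) = (A : ℝ) + (J : ℝ) + (c : ℝ) + 1 := by
                rw [hB]; push_cast; ring
              have hs0 : (0 : ℝ) ≤ (s : ℝ) := Nat.cast_nonneg s
              have hr0 : (0 : ℝ) ≤ (r : ℝ) := Nat.cast_nonneg r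
              have hA0 : (0 : ℝ) ≤ (A : ℝ) := Nat.cast_nonneg A
              have hJ0 : (0 : ℝ) ≤ (J : ℝ) := Nat.cast_nonneg J
              have hc0 : (0 : ℝ) ≤ (c : ℝ) := Nat.cast_nonneg c
              rw [hBr]
              nlinarith [mul_nonneg hA0 hr0, mul_nonneg hJ0 hs0, mul_nonneg hJ0 hr0,
                mul_nonneg hc0 hs0, mul_nonneg hc0 hr0, mul_nonneg hA0 hs0]
    calc ((B : ℝ))⁻¹ ^ c ≤ _ := step3
      _ = _ := step2.symm
      _ ≤ _ := step1
  · rw [heq]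
    apply Finset.prod_le_one
    · intro t _; positivity
    · intro t _
      rw [div_le_one (by positivity)]
      linarith

/-- There are positive constants `C₁, C₂` with
`C₁ ≤ liminf_{|k|→∞} I₁(k) ≤ limsup_{|k|→∞} I₁(k) ≤ C₂`; in particular `I₁(k)` is
bounded above and bounded away from `0` for all large `|k|`. -/
theorem Ione_bounded (N : ℕ) (hN : 2 ≤ N) (α : ℝ) (hα : -1 < α)
    (n : Fin N → ℕ) (hn : ∀ i, 1 ≤ n i) (j : Fin N → ℕ) (hj : ∀ i, j i < n i) :
    (∃ C₁ C₂ : ℝ, 0 < C₁ ∧ 0 < C₂ ∧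
      C₁ ≤ liminf (Ione N α n j) (multiAtTop N) ∧
      liminf (Ione N α n j) (multiAtTop N) ≤ limsup (Ione N α n j) (multiAtTop N) ∧
      limsup (Ione N α n j) (multiAtTop N) ≤ C₂) ∧
    (∃ c C : ℝ, 0 < c ∧
      ∀ᶠ k in multiAtTop N, c ≤ Ione N α n j k ∧ Ione N α n j k ≤ C) := by
  have hpt := fun k => Ione_pt_bounds N hN α hα n hn j k
  set C₁ : ℝ :=
    ((((∑ i, n i) + (∑ i, j i) + ⌈(N : ℝ) + α + 1⌉₊ + 1 : ℕ) : ℝ))⁻¹ ^ (⌈(N : ℝ) + α + 1⌉₊)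
    with hC₁def
  have hBpos : (0 : ℝ) < (((∑ i, n i) + (∑ i, j i) + ⌈(N : ℝ) + α + 1⌉₊ + 1 : ℕ) : ℝ) := by
    exact_mod_cast Nat.succ_pos _
  have hC₁pos : 0 < C₁ := by rw [hC₁def]; positivity
  have hne : (multiAtTop N).NeBot := by
    unfold multiAtTop
    apply Filter.comap_neBot
    intro t ht
    rcases Filter.mem_atTop_sets.1 ht with ⟨b, hb⟩
    refine ⟨fun _ => b, hb _ ?_⟩
    simp only [Finset.sum_const, Finset.card_univ, Fintype.card_fin, smul_eq_mul]
    exact Nat.le_mul_of_pos_left b (by omega)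
  have hbdd_le : (multiAtTop N).IsBoundedUnder (· ≤ ·) (Ione N α n j) :=
    Filter.isBoundedUnder_of ⟨1, fun k => (hpt k).2⟩
  have hbdd_ge : (multiAtTop N).IsBoundedUnder (· ≥ ·) (Ione N α n j) :=
    Filter.isBoundedUnder_of ⟨C₁, fun k => (hpt k).1⟩
  refine ⟨⟨C₁, 1, hC₁pos, one_pos, ?_, ?_, ?_⟩,
    ⟨C₁, 1, hC₁pos, Filter.Eventually.of_forall fun k => ⟨(hpt k).1, (hpt k).2⟩⟩⟩
  · exact Filter.le_liminf_of_le hbdd_le.isCoboundedUnder_ge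
      (Filter.Eventually.of_forall fun k => (hpt k).1)
  · exact Filter.liminf_le_limsup hbdd_le hbdd_ge
  · exact Filter.limsup_le_of_le hbdd_ge.isCoboundedUnder_le
      (Filter.Eventually.of_forall fun k => (hpt k).2)
end

section
/- Let N ≥ 2 and m ≥ 2, j ∈ ℕ. Then lim_{k→∞} [((mk+j)!)^N / (N(mk+j))!] · [(Nk)! / (k!)^N] = 0. Equivalently, lim_{k→∞} m^{(N-1)/2} (N^N)^{(1-m)k - j} = 0, using Stirling's approximation. -/
/-!
By Stirling's formula `(n!)^N / (Nn)! ~ √(2πn)^(N-1) / (√N · N^(Nn))`. Taking the quotient of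
this at `n = mk + j` and at `n = k`, the product in the theorem is asymptotic to
`m^((N-1)/2) (N^N)^((1-m)k-j)`, which tends to `0` geometrically since `N^N > 1` and `m ≥ 2`.
-/

open Filter Nat Real Asymptotics Topology

lemma factorial_pow_div_factorial_mul_isEquivalent {N : ℕ} (hN : 0 < N) :
    (fun n : ℕ => (n ! : ℝ) ^ N / (N * n)!) ~[atTop]
      fun n => √(2 * n * π) ^ (N - 1) / (√N * (N : ℝ) ^ (N * n)) := by
  have h := (Stirling.factorial_isEquivalent_stirling.pow N).div
    (Stirling.factorial_isEquivalent_stirling.comp_tendsto (tendsto_id.const_mul_atTop' hN))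
  refine h.congr_right ?_
  filter_upwards [eventually_ge_atTop 1] with n hn
  have hn' : (0 : ℝ) < n := by exact_mod_cast hn
  have hsqrt : √(2 * (N * n : ℕ) * π) = √N * √(2 * n * π) := by
    rw [← Real.sqrt_mul (by positivity)]; push_cast; ring_nf
  have hpow : ((N * n : ℕ) / exp 1) ^ (N * n) = (N : ℝ) ^ (N * n) * ((n / exp 1) ^ n) ^ N := by
    rw [Nat.cast_mul, mul_div_assoc, mul_pow, ← pow_mul, mul_comm n N]
  have hsucc : √(2 * n * π) ^ N = √(2 * n * π) ^ (N - 1) * √(2 * n * π) := by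
    rw [← pow_succ, Nat.sub_add_cancel hN]
  simp only [Pi.div_apply, Pi.pow_apply, Function.comp_apply, id, hsqrt, hpow, mul_pow, hsucc]
  field_simp

lemma tendsto_mul_add_div_self_atTop (m j : ℕ) :
    Tendsto (fun k : ℕ => ((m * k + j : ℕ) : ℝ) / k) atTop (𝓝 m) := by
  have h := (tendsto_const_div_atTop_nhds_zero_nat (j : ℝ)).const_add (m : ℝ)
  rw [add_zero] at h
  refine h.congr' ?_
  filter_upwards [eventually_ge_atTop 1] with k hk
  have hk' : (k : ℝ) ≠ 0 := by positivity
  push_cast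
  field_simp

lemma sqrt_pow_sub_one_eq_rpow {x : ℝ} (hx : 0 ≤ x) {N : ℕ} (hN : 0 < N) :
    √x ^ (N - 1) = x ^ (((N : ℝ) - 1) / 2) := by
  rw [Real.sqrt_eq_rpow, ← Real.rpow_natCast, ← Real.rpow_mul hx, Nat.cast_sub hN, Nat.cast_one]
  ring_nf

lemma factorial_pow_div_factorial_mul_ratio_isEquivalent {N m : ℕ} (j : ℕ) (hN : 0 < N)
    (hm : 0 < m) :
    (fun k : ℕ => ((m * k + j)! : ℝ) ^ N / (N * (m * k + j))! * ((N * k)! / (k ! : ℝ) ^ N))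
      ~[atTop] fun k => (m : ℝ) ^ (((N : ℝ) - 1) / 2) *
        ((N : ℝ) ^ N) ^ ((1 - (m : ℤ)) * k - j) := by
  have hg := factorial_pow_div_factorial_mul_isEquivalent hN
  have hshift : Tendsto (fun k => m * k + j) atTop atTop :=
    tendsto_atTop_mono (fun k => Nat.le_add_right _ _) (tendsto_id.const_mul_atTop' hm)
  have hlim := ((continuous_sqrt.tendsto _).comp (tendsto_mul_add_div_self_atTop m j)).pow (N - 1)
  rw [sqrt_pow_sub_one_eq_rpow (by positivity) hN] at hlim
  have hconst := (isEquivalent_const_iff_tendsto (by positivity)).mpr hlim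
  refine (((hg.comp_tendsto hshift).mul hg.inv).congr_left ?_).trans
    ((hconst.mul IsEquivalent.refl).congr_left ?_)
  · exact Eventually.of_forall fun k => by simp
  filter_upwards [eventually_ge_atTop 1] with k hk
  have hk' : (0 : ℝ) < k := by exact_mod_cast hk
  have hzpow : ((N : ℝ) ^ N) ^ ((1 - (m : ℤ)) * k - j) =
      (N : ℝ) ^ (N * k) / (N : ℝ) ^ (N * (m * k + j)) := by
    rw [pow_mul, pow_mul, ← zpow_natCast _ k, ← zpow_natCast _ (m * k + j),
      ← zpow_sub₀ (by positivity)]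
    push_cast; ring_nf
  have hsqrt : √(((m * k + j : ℕ) : ℝ) / k) =
      √(2 * ((m * k + j : ℕ) : ℝ) * π) / √(2 * k * π) := by
    rw [← Real.sqrt_div' _ (by positivity)]; congr 1; field_simp
  simp only [Pi.mul_apply, Pi.inv_apply, Function.comp_apply, hzpow, hsqrt, div_pow]
  field_simp

lemma tendsto_zpow_mul_sub_atTop_zero {b : ℝ} (hb : 1 < b) {a : ℤ} (ha : a < 0) (j : ℤ) :
    Tendsto (fun k : ℕ => b ^ (a * k - j)) atTop (𝓝 0) := by
  have hb₀ : 0 < b := zero_lt_one.trans hb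
  have h := (tendsto_pow_atTop_nhds_zero_of_lt_one (zpow_pos hb₀ a).le
    (zpow_lt_one_of_neg₀ hb ha)).mul_const (b ^ (-j))
  rw [zero_mul] at h
  refine h.congr fun k => ?_
  rw [← zpow_natCast, ← zpow_mul, ← zpow_add₀ hb₀.ne', sub_eq_add_neg]

/-- For integers `N ≥ 2`, `m ≥ 2` and fixed `j ∈ ℕ`,
`lim_{k→∞} ((mk+j)!)^N/(N(mk+j))! · (Nk)!/(k!)^N = 0`; equivalently (via Stirling),
`lim_{k→∞} m^{(N-1)/2} (N^N)^{(1-m)k-j} = 0`. -/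
theorem stirling_limit_zero (N m j : ℕ) (hN : 2 ≤ N) (hm : 2 ≤ m) :
    Tendsto (fun k : ℕ =>
        (((m * k + j).factorial : ℝ)) ^ N / (((N * (m * k + j)).factorial : ℝ)) *
          (((N * k).factorial : ℝ) / ((k.factorial : ℝ)) ^ N))
      atTop (nhds 0) ∧
    Tendsto (fun k : ℕ =>
        (m : ℝ) ^ (((N : ℝ) - 1) / 2) *
          ((N : ℝ) ^ (N : ℕ)) ^ ((1 - (m : ℤ)) * (k : ℤ) - (j : ℤ)))
      atTop (nhds 0) := by
  have hbase : 1 < (N : ℝ) ^ N := one_lt_pow₀ (by exact_mod_cast hN) (by omega)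
  have hdecay := (tendsto_zpow_mul_sub_atTop_zero hbase (by omega : 1 - (m : ℤ) < 0) j).const_mul
    ((m : ℝ) ^ (((N : ℝ) - 1) / 2))
  rw [mul_zero] at hdecay
  have hequiv :=
    factorial_pow_div_factorial_mul_ratio_isEquivalent j (by omega : 0 < N) (by omega : 0 < m)
  exact ⟨hequiv.symm.tendsto_nhds hdecay, hdecay⟩
end

section
/- Let N ≥ 2, s ≥ 2 integers and j_s, j_m ∈ ℕ fixed. Then lim_{k→∞} [((sk+j_s)!)^{N-1} (k+j_m)! / ((N-1)(sk+j_s) + k + j_m)!] · [(Nk)! / (k!)^N] = 0. -/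
/-!
Write `M = N - 1`. The term is a quotient of products of factorials `(a k + b)!`, and
`(a (k + 1) + b)! / (a k + b)! ~ a^a k^a`. The powers of `k` cancel in the quotient of consecutive
terms, which therefore tends to `s^(sM) (M + 1)^(M + 1) / (Ms + 1)^(Ms + 1)`. This is `< 1` because
`(M + 1/s)^s ≥ M + 1` by Bernoulli's inequality and `Ms + 1 > M + 1`. By the ratio test the terms
are summable, so they tend to `0`.
-/

open Filter Finset Topology
open scoped Nat

theorem cast_factorial_mul_succ_add_div_eq_prod (a b k : ℕ) :
    ((a * (k + 1) + b)! : ℝ) / (a * k + b)! = ∏ i ∈ range a, ((a * k + b + 1 + i : ℕ) : ℝ) := by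
  rw [show a * (k + 1) + b = a * k + b + a by ring, ← Nat.factorial_mul_ascFactorial,
    Nat.ascFactorial_eq_prod_range, Nat.cast_mul, mul_div_cancel_left₀ _ (by positivity),
    Nat.cast_prod]

theorem tendsto_factorial_mul_succ_add_div_factorial_div_pow (a b : ℕ) :
    Tendsto (fun k : ℕ => ((a * (k + 1) + b)! : ℝ) / (a * k + b)! / (k : ℝ) ^ a) atTop
      (𝓝 ((a : ℝ) ^ a)) := by
  have hfactor (i : ℕ) : Tendsto (fun k : ℕ => ((a * k + b + 1 + i : ℕ) : ℝ) / k) atTop (𝓝 a) := by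
    refine (div_one (a : ℝ) ▸ tendsto_add_mul_div_add_mul_atTop_nhds ((b + 1 + i : ℕ) : ℝ) 0
      (a : ℝ) one_ne_zero).congr fun k => ?_
    push_cast
    ring
  simpa [cast_factorial_mul_succ_add_div_eq_prod, prod_div_distrib] using
    tendsto_finsetProd (range a) fun i _ => hfactor i

theorem tendsto_zero_of_ratio_tendsto_lt_one {α : Type*} [NormedAddCommGroup α] [CompleteSpace α]
    {f : ℕ → α} {l : ℝ} (hl : l < 1) (hf : ∀ᶠ n in atTop, f n ≠ 0)
    (h : Tendsto (fun n ↦ ‖f (n + 1)‖ / ‖f n‖) atTop (𝓝 l)) :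
    Tendsto f atTop (𝓝 0) :=
  (summable_of_ratio_test_tendsto_lt_one hl hf h).tendsto_atTop_zero

theorem pow_self_mul_succ_le_mul_add_one_pow (M s : ℕ) (hM : 1 ≤ M) (hs : 1 ≤ s) :
    (s : ℝ) ^ s * (M + 1) ≤ (M * s + 1) ^ s := by
  have hs0 : (0 : ℝ) < s := by exact_mod_cast hs
  have hM1 : (1 : ℝ) ≤ M := by exact_mod_cast hM
  have hs1 : (1 : ℝ) ≤ s := by exact_mod_cast hs
  -- Bernoulli's inequality for `(M + 1/s)^s = (1 + (M - 1 + 1/s))^s`.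
  have bernoulli := one_add_mul_le_pow (a := (M : ℝ) - 1 + 1 / s)
    (by nlinarith [show (0 : ℝ) ≤ 1 / s by positivity]) s
  have hbound : (M : ℝ) + 1 ≤ ((M * s + 1) / s) ^ s :=
    calc (M : ℝ) + 1 ≤ 1 + s * ((M : ℝ) - 1 + 1 / s) := by
          field_simp
          nlinarith
      _ ≤ (1 + ((M : ℝ) - 1 + 1 / s)) ^ s := bernoulli
      _ = ((M * s + 1) / s) ^ s := by
          congr 1
          field_simp
          ring
  rw [div_pow, le_div_iff₀ (by positivity)] at hbound
  linarith

theorem pow_self_pow_mul_succ_pow_lt (M s : ℕ) (hM : 1 ≤ M) (hs : 2 ≤ s) :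
    ((s : ℝ) ^ s) ^ M * (M + 1) ^ (M + 1) < (M * s + 1) ^ (M * s + 1) := by
  have hMs : (M : ℝ) + 1 < M * s + 1 := by
    have : (M : ℝ) * 2 ≤ M * s := by gcongr; exact_mod_cast hs
    have : (1 : ℝ) ≤ M := by exact_mod_cast hM
    linarith
  calc ((s : ℝ) ^ s) ^ M * (M + 1) ^ (M + 1) = (s ^ s * (M + 1)) ^ M * (M + 1) := by
        rw [mul_pow, pow_succ, mul_assoc]
    _ ≤ ((M * s + 1) ^ s) ^ M * (M + 1) := by
        gcongr
        exact pow_self_mul_succ_le_mul_add_one_pow M s hM (by omega)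
    _ < ((M * s + 1) ^ s) ^ M * (M * s + 1) := by gcongr
    _ = (M * s + 1) ^ (M * s + 1) := by ring

/-- For integers `N ≥ 2`, `s ≥ 2` and fixed `j_s, j_m ∈ ℕ`,
`lim_{k→∞} ((sk+j_s)!)^{N-1} (k+j_m)! / ((N-1)(sk+j_s)+k+j_m)! · (Nk)!/(k!)^N = 0`. -/
theorem stirling_limit_zero' (N s js jm : ℕ) (hN : 2 ≤ N) (hs : 2 ≤ s) :
    Tendsto (fun k : ℕ =>
        (((s * k + js).factorial : ℝ)) ^ (N - 1) * ((k + jm).factorial : ℝ) /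
            (((N - 1) * (s * k + js) + k + jm).factorial : ℝ) *
          (((N * k).factorial : ℝ) / ((k.factorial : ℝ)) ^ N))
      atTop (nhds 0) := by
  obtain ⟨M, rfl⟩ : ∃ M, N = M + 1 := ⟨N - 1, by omega⟩
  simp only [Nat.add_sub_cancel]
  have hA := tendsto_factorial_mul_succ_add_div_factorial_div_pow s js
  have hB := tendsto_factorial_mul_succ_add_div_factorial_div_pow 1 jm
  have hC := tendsto_factorial_mul_succ_add_div_factorial_div_pow (M * s + 1) (M * js + jm)
  have hD := tendsto_factorial_mul_succ_add_div_factorial_div_pow (M + 1) 0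
  have hE := tendsto_factorial_mul_succ_add_div_factorial_div_pow 1 0
  simp only [one_mul, add_zero, show ∀ k, (M * s + 1) * k + (M * js + jm) = M * (s * k + js) + k + jm
    from fun k => by ring] at hB hC hD hE
  have hratio :=
    (((hA.pow M).mul hB).div hC (by positivity)).mul (hD.div (hE.pow (M + 1)) (by simp))
  refine tendsto_zero_of_ratio_tendsto_lt_one ?_ (.of_forall fun k => by positivity)
    (hratio.congr' ?_)
  · push_cast
    simp only [one_pow, mul_one, div_one]
    rw [div_mul_eq_mul_div, div_lt_one (by positivity)]
    exact pow_self_pow_mul_succ_pow_lt M s (by omega) hs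
  · filter_upwards [eventually_ne_atTop 0] with k hk
    have hk' : (k : ℝ) ≠ 0 := by exact_mod_cast hk
    simp only [Pi.div_apply, Real.norm_eq_abs]
    rw [abs_of_pos (by positivity), abs_of_pos (by positivity)]
    simp only [div_pow]
    field_simp
    ring
end

section
/- Let N ≥ 2, α > -1, n ∈ (ℕ_{≥1})^N with n_i ≥ 2 for at least one i, and j a multi-index with 0 ≤ j_i ≤ n_i - 1. Define c_{kj} = sqrt( (nk+j)! Γ(N+|k|+α+1) Γ(N+|j|+α+1) / (k! j! Γ(N+|nk+j|+α+1) Γ(N+α+1)) ) for k ∈ ℕ^N. Then liminf_{|k|→∞} c_{kj} = 0. -/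
/-!
Fix `a` with `n a ≥ 2` and some `b ≠ a`, and follow `k = M e_b + e_a`, so that `|k| = M + 1`.
Up to a factor independent of `M`, `c_{kj}²` is `(M + D)! / M! · Γ(y) / Γ(y + D + d)` with
`y = N + α + 2 + M`, `M + D = n_b M + j_b` and `d = n_a - 1 + |j| - j_b ≥ 1`. Comparing factor
by factor, `(M + D)! / M! ≤ Γ(y + D) / Γ(y)`, and the surplus `d ≥ 1` costs at least a factor
`y + D ≥ M + 1`; so `c_{kj}² = O(1 / M)` along this sequence.
-/

open Filter

/-- `c_{kj} = sqrt((nk+j)! Γ(N+|k|+α+1) Γ(N+|j|+α+1) /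
(k! j! Γ(N+|nk+j|+α+1) Γ(N+α+1)))`. -/
noncomputable def cCoef (N : ℕ) (α : ℝ) (n j k : Fin N → ℕ) : ℝ :=
  Real.sqrt ((∏ i, ((n i * k i + j i).factorial : ℝ)) *
      Real.Gamma (N + (∑ i, k i) + α + 1) * Real.Gamma (N + (∑ i, j i) + α + 1) /
    ((∏ i, ((k i).factorial : ℝ)) * (∏ i, ((j i).factorial : ℝ)) *
      Real.Gamma (N + (∑ i, (n i * k i + j i)) + α + 1) * Real.Gamma (N + α + 1)))

open Real Topology
open scoped Nat

namespace Real

theorem Gamma_add_nat_mul_Gamma_le {x y : ℝ} (hx : 0 < x) (hxy : x ≤ y) (m : ℕ) :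
    Gamma (x + m) * Gamma y ≤ Gamma x * Gamma (y + m) := by
  induction m with
  | zero => simp
  | succ m ih =>
    have hxm : 0 < x + m := by positivity
    have hym : 0 < y + m := by linarith
    rw [Nat.cast_succ, ← add_assoc, ← add_assoc, Gamma_add_one hxm.ne', Gamma_add_one hym.ne']
    calc (x + m) * Gamma (x + m) * Gamma y = (x + m) * (Gamma (x + m) * Gamma y) := by ring
      _ ≤ (y + m) * (Gamma x * Gamma (y + m)) := by
        gcongr
        exact mul_nonneg (Gamma_pos_of_pos hxm).le (Gamma_pos_of_pos (hx.trans_le hxy)).le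
      _ = Gamma x * ((y + m) * Gamma (y + m)) := by ring

theorem mul_Gamma_le_Gamma_add_nat {y : ℝ} (hy : 1 ≤ y) {m : ℕ} (hm : 1 ≤ m) :
    y * Gamma y ≤ Gamma (y + m) := by
  rw [← Gamma_add_one (by positivity)]
  have hm' : (1 : ℝ) ≤ m := by exact_mod_cast hm
  exact Gamma_strictMonoOn_Ici.monotoneOn (Set.mem_Ici.mpr (by linarith))
    (Set.mem_Ici.mpr (by linarith)) (by linarith)

end Real

theorem factorial_add_mul_Gamma_le {T : ℝ} (hT : 0 ≤ T) (M D : ℕ) {d : ℕ} (hd : 1 ≤ d) :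
    ((M + D)! : ℝ) * Gamma (T + M + 1) * (M + 1) ≤ M ! * Gamma (T + M + 1 + D + d) := by
  set y := T + M + 1
  have hMy : (M : ℝ) + 1 ≤ y := by linarith
  have hyD : (M : ℝ) + 1 ≤ y + D := by linarith [(D.cast_nonneg : (0 : ℝ) ≤ D)]
  have hratio : ((M + D)! : ℝ) * Gamma y ≤ M ! * Gamma (y + D) := by
    have := Gamma_add_nat_mul_Gamma_le (by positivity : (0 : ℝ) < M + 1) hMy D
    rwa [add_right_comm, ← Nat.cast_add, Gamma_nat_eq_factorial, Gamma_nat_eq_factorial] at this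
  calc ((M + D)! : ℝ) * Gamma y * (M + 1) ≤ M ! * Gamma (y + D) * (y + D) := by
        gcongr
    _ = M ! * ((y + D) * Gamma (y + D)) := by ring
    _ ≤ M ! * Gamma (y + D + d) := by
        gcongr
        exact mul_Gamma_le_Gamma_add_nat (by linarith) hd

theorem cCoef_eq (N : ℕ) (α : ℝ) (n j k : Fin N → ℕ) :
    cCoef N α n j k = √((∏ i, ((n i * k i + j i)! / ((k i)! * (j i)!) : ℝ)) *
      (Gamma (N + (∑ i, k i) + α + 1) * Gamma (N + (∑ i, j i) + α + 1) /
        (Gamma (N + (∑ i, (n i * k i + j i)) + α + 1) * Gamma (N + α + 1)))) := by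
  rw [cCoef, Finset.prod_div_distrib, Finset.prod_mul_distrib]
  ring_nf

theorem cCoef_single_add_single_le {N : ℕ} {α : ℝ} (hα : -1 < α) {n j : Fin N → ℕ}
    {a b : Fin N} (hab : a ≠ b) (ha : 2 ≤ n a) (hb : 1 ≤ n b) (M : ℕ) :
    cCoef N α n j (Pi.single b M + Pi.single a 1) ≤
      √((n a + j a)! / ((j a)! * (j b)!) *
        (Gamma (N + (∑ i, j i) + α + 1) / Gamma (N + α + 1)) / (M + 1)) := by
  set k : Fin N → ℕ := Pi.single b M + Pi.single a 1
  set T : ℝ := N + α + 1 with hT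
  have hT0 : 0 < T := by linarith [N.cast_nonneg (α := ℝ)]
  have hk : ∑ i, k i = M + 1 := by simp [k, Finset.sum_add_distrib]
  have hp : ∏ i, ((n i * k i + j i)! / ((k i)! * (j i)!) : ℝ) =
      (n b * M + j b)! / (M ! * (j b)!) * ((n a + j a)! / (j a)!) := by
    rw [Fintype.prod_eq_mul b a hab.symm]
    · simp [k, hab, hab.symm]
    · intro i hi
      simp [k, hi.1, hi.2, Nat.factorial_ne_zero]
  obtain ⟨D, hD⟩ : ∃ D, n b * M + j b = M + D :=
    ⟨n b * M + j b - M, by have := Nat.le_mul_of_pos_left M hb; omega⟩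
  obtain ⟨d, hd, hnk⟩ : ∃ d, 1 ≤ d ∧ ∑ i, (n i * k i + j i) = M + 1 + D + d := by
    have hjb : j b ≤ ∑ i, j i :=
      Finset.single_le_sum (fun i _ ↦ Nat.zero_le _) (Finset.mem_univ b)
    have : ∑ i, (n i * k i + j i) = n b * M + n a + ∑ i, j i := by
      simp [k, Finset.sum_add_distrib, mul_add, Pi.single_apply]
    exact ⟨n a + ∑ i, j i - 1 - j b, by omega, by omega⟩
  set K : ℝ := (n a + j a)! / ((j a)! * (j b)!) * (Gamma (N + (∑ i, j i) + α + 1) / Gamma T)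
  have hK : 0 ≤ K := by
    have : 0 < (N : ℝ) + (∑ i, j i : ℕ) + α + 1 := by
      linarith [(∑ i, j i).cast_nonneg (α := ℝ)]
    have := Gamma_pos_of_pos this
    have := Gamma_pos_of_pos hT0
    positivity
  have hratio : ((M + D)! : ℝ) * Gamma (T + M + 1) / (M ! * Gamma (T + M + 1 + D + d)) ≤
      1 / (M + 1) := by
    rw [div_le_div_iff₀ (by positivity) (by positivity)]
    linarith [factorial_add_mul_Gamma_le hT0.le M D hd]
  rw [cCoef_eq, hp, hk, hnk, hD]
  refine sqrt_le_sqrt ?_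
  calc _ = K * (((M + D)! : ℝ) * Gamma (T + M + 1) / (M ! * Gamma (T + M + 1 + D + d))) := by
        simp only [K, hT, Nat.cast_add, Nat.cast_one]
        ring_nf
    _ ≤ K * (1 / (M + 1)) := mul_le_mul_of_nonneg_left hratio hK
    _ = _ := by ring

theorem Filter.liminf_eq_zero_of_tendsto_comp {ι : Type*} {f : ι → ℝ} {l : Filter ι}
    {u : ℕ → ι} (hf : 0 ≤ f) (hu : Tendsto u atTop l)
    (hfu : Tendsto (f ∘ u) atTop (𝓝 0)) :
    liminf f l = 0 := by
  have hbdd : IsBoundedUnder (· ≥ ·) l f := isBoundedUnder_of ⟨0, hf⟩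
  have hcobdd : IsCoboundedUnder (· ≥ ·) (map u atTop) f := by
    rw [IsCoboundedUnder, map_map]
    exact hfu.isBoundedUnder_le.isCoboundedUnder_ge
  refine le_antisymm ?_ (le_liminf_of_le (hcobdd.mono (map_mono hu)) (.of_forall hf))
  exact (hu.liminf_le_liminf_comp hcobdd hbdd).trans_eq hfu.liminf_eq

theorem tendsto_single_add_single_multiAtTop {N : ℕ} (a b : Fin N) :
    Tendsto (fun M : ℕ ↦ (Pi.single b M + Pi.single a 1 : Fin N → ℕ)) atTop
      (multiAtTop N) := by
  refine tendsto_comap_iff.mpr ?_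
  simp only [Function.comp_def, Pi.add_apply, Finset.sum_add_distrib, Finset.sum_pi_single',
    Finset.mem_univ, if_true]
  exact tendsto_add_atTop_nat 1

theorem cCoef_liminf_zero_general (N : ℕ) (hN : 2 ≤ N) (α : ℝ) (hα : -1 < α)
    (n : Fin N → ℕ) (hn : ∀ i, 1 ≤ n i) (hn2 : ∃ i, 2 ≤ n i)
    (j : Fin N → ℕ) :
    liminf (cCoef N α n j) (multiAtTop N) = 0 := by
  obtain ⟨a, ha⟩ := hn2
  obtain ⟨b, hba⟩ : ∃ b, b ≠ a :=
    Fintype.exists_ne_of_one_lt_card (by rw [Fintype.card_fin]; omega) a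
  refine liminf_eq_zero_of_tendsto_comp (fun k ↦ Real.sqrt_nonneg _)
    (tendsto_single_add_single_multiAtTop a b) ?_
  have hbound (K : ℝ) : Tendsto (fun M : ℕ ↦ √(K / (M + 1))) atTop (𝓝 0) := by
    simpa using ((tendsto_const_div_atTop_nhds_zero_nat K).comp (tendsto_add_atTop_nat 1)).sqrt
  exact squeeze_zero (fun M ↦ Real.sqrt_nonneg _)
    (cCoef_single_add_single_le hα hba.symm ha (hn b)) (hbound _)

/-- For `N ≥ 2`, `α > -1`, a multi-index `n` with `n_i ≥ 1` and `n_i ≥ 2` for at least one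
`i`, and `0 ≤ j_i ≤ n_i - 1`: `liminf_{|k|→∞} c_{kj} = 0`. -/
theorem cCoef_liminf_zero (N : ℕ) (hN : 2 ≤ N) (α : ℝ) (hα : -1 < α)
    (n : Fin N → ℕ) (hn : ∀ i, 1 ≤ n i) (hn2 : ∃ i, 2 ≤ n i)
    (j : Fin N → ℕ) (hj : ∀ i, j i < n i) :
    liminf (cCoef N α n j) (multiAtTop N) = 0 :=
  cCoef_liminf_zero_general N hN α hα n hn hn2 j
end

section
/- Let N ≥ 2, α > -1, n ∈ (ℕ_{≥1})^N and j a multi-index with 0 ≤ j_i ≤ n_i - 1. Define X_j: A_α^2(B_N) → 𝒜_j on the orthonormal basis by X_j e_k = c_{kj} e_{nk+j} with c_{kj} = sqrt( (nk+j)! Γ(N+|k|+α+1) Γ(N+|j|+α+1) / (k! j! Γ(N+|nk+j|+α+1) Γ(N+α+1)) ). Then X_j intertwines multiplication operators: X_j M_z = M_{z^n}|_{𝒜_j} X_j, i.e. X_j M_z e_k = M_{z^n} X_j e_k for all k ∈ ℕ^N. -/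
lemma keyScalar (Fk Fj Fm Fmn P1 G0 G1 G2 G3 G4 G5 : ℝ)
    (hFk : 0 < Fk) (hFj : 0 < Fj) (hFm : 0 < Fm) (hP1 : 0 < P1)
    (hG0 : 0 < G0) (hG1 : 0 < G1) (hG2 : 0 < G2) (hG3 : 0 < G3) (hG4 : 0 < G4)
    (hG5 : 0 < G5) :
    Real.sqrt (P1 * G1 / G2) * Real.sqrt (Fmn * G2 * G3 / (P1 * Fk * Fj * G4 * G0))
    = Real.sqrt (Fm * G1 * G3 / (Fk * Fj * G5 * G0)) * Real.sqrt (Fmn * G5 / (Fm * G4)) := by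
  rw [← Real.sqrt_mul (by positivity), ← Real.sqrt_mul (by positivity)]
  congr 1
  rw [div_mul_div_comm, div_mul_div_comm, div_eq_div_iff (by positivity) (by positivity)]
  ring

/-- The diagonal operator `X_j e_k = c_{kj} e_{nk+j}` intertwines the (shift model of the)
multiplication operators: `X_j M_z = M_{z^n} X_j` on the weighted Bergman space
`A_α²(B_N)`, here realized as the Hilbert space `H` with orthonormal basis
`e_k`, `k ∈ ℕ^N`, on which `M_z e_m = sqrt((m+1)Γ(N+|m|+α+1)/Γ(N+|m+1|+α+1)) e_{m+1}` and
`M_{z^n} e_m = sqrt((m+n)! Γ(N+|m|+α+1)/(m! Γ(N+|m+n|+α+1))) e_{m+n}`. -/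
theorem intertwining (N : ℕ) (hN : 2 ≤ N) (α : ℝ) (hα : -1 < α)
    (H : Type*) [NormedAddCommGroup H] [InnerProductSpace ℂ H] [CompleteSpace H]
    (e : HilbertBasis (Fin N → ℕ) ℂ H)
    (n : Fin N → ℕ) (hn : ∀ i, 1 ≤ n i) (j : Fin N → ℕ) (hj : ∀ i, j i < n i)
    (Mz : H →L[ℂ] H)
    (hMz : ∀ m : Fin N → ℕ, Mz (e m) =
      (Real.sqrt ((∏ i, ((m i + 1 : ℕ) : ℝ)) * Real.Gamma (N + (∑ i, m i) + α + 1) /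
          Real.Gamma (N + (∑ i, (m i + 1)) + α + 1)) : ℂ) • e (fun i => m i + 1))
    (Mzn : H →L[ℂ] H)
    (hMzn : ∀ m : Fin N → ℕ, Mzn (e m) =
      (Real.sqrt ((∏ i, ((m i + n i).factorial : ℝ)) * Real.Gamma (N + (∑ i, m i) + α + 1) /
          ((∏ i, ((m i).factorial : ℝ)) *
            Real.Gamma (N + (∑ i, (m i + n i)) + α + 1))) : ℂ) • e (fun i => m i + n i))
    (X : H →L[ℂ] H)
    (hX : ∀ k : Fin N → ℕ, X (e k) = (cCoef N α n j k : ℂ) • e (fun i => n i * k i + j i)) :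
    (∀ k : Fin N → ℕ, X (Mz (e k)) = Mzn (X (e k))) ∧ X.comp Mz = Mzn.comp X := by
  have main : ∀ k : Fin N → ℕ, X (Mz (e k)) = Mzn (X (e k)) := by
    intro k
    rw [hMz k, map_smul, hX, hX k, map_smul, hMzn, smul_smul, smul_smul]
    have hidx : (fun i => n i * (k i + 1) + j i) = fun i => n i * k i + j i + n i := by
      funext i; ring
    rw [hidx]
    congr 1
    rw [← Complex.ofReal_mul, ← Complex.ofReal_mul, Complex.ofReal_inj]
    simp only [cCoef]
    have h1 : ∀ i : Fin N, n i * (k i + 1) + j i = n i * k i + j i + n i := fun i => by ring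
    simp only [h1]
    have hsplit : (∏ i, (((k i + 1).factorial : ℕ) : ℝ))
        = (∏ i, ((k i + 1 : ℕ) : ℝ)) * ∏ i, (((k i).factorial : ℕ) : ℝ) := by
      rw [← Finset.prod_mul_distrib]
      refine Finset.prod_congr rfl fun i _ => ?_
      rw [Nat.factorial_succ]; push_cast; ring
    rw [hsplit]
    have gp : ∀ x : ℕ, 0 < Real.Gamma (N + x + α + 1) := by
      intro x
      apply Real.Gamma_pos_of_pos
      have h1 : (0:ℝ) ≤ N := Nat.cast_nonneg N
      have h2 : (0:ℝ) ≤ x := Nat.cast_nonneg x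
      linarith
    have g0 : 0 < Real.Gamma (N + α + 1) := by
      apply Real.Gamma_pos_of_pos
      have h1 : (0:ℝ) ≤ N := Nat.cast_nonneg N
      linarith
    have fpos : ∀ m : Fin N → ℕ, 0 < ∏ i, (((m i).factorial : ℕ) : ℝ) := fun m =>
      Finset.prod_pos fun i _ => by positivity
    have ppos : 0 < ∏ i, ((k i + 1 : ℕ) : ℝ) :=
      Finset.prod_pos fun i _ => by positivity
    exact keyScalar _ _ _ _ _ _ _ _ _ _ _ (fpos k) (fpos j)
      (fpos fun i => n i * k i + j i) ppos g0 (gp _) (gp _) (gp _) (gp _) (gp _)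
  refine ⟨main, ?_⟩
  have hd : Dense (Submodule.span ℂ (Set.range ⇑e) : Set H) := by
    rw [Submodule.dense_iff_topologicalClosure_eq_top]
    exact e.dense_span
  refine ContinuousLinearMap.ext_on hd ?_
  rintro x ⟨k, rfl⟩
  simpa using main k
end
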